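/- For positive theories, weak execution models and execution models coincide: Let C be a positive CP-theory. Then every weak execution model of C is an execution model of C. -/
import Mathlib


noncomputable section
open scoped Classical

namespace CP

/-- The three truth values. -/
inductive TV where
  | f | u | t
deriving DecidableEq

namespace TV

/-- Rank of a truth value in the truth order `f ≤_t u ≤_t t`. -/
def rank : TV → ℕ
  | f => 0
  | u => 1
  | t => 2

/-- Minimum in the truth order. -/
def tmin (a b : TV) : TV := if rank a ≤ rank b then a else b

/-- Maximum in the truth order. -/
def tmax (a b : TV) : TV := if rank a ≤ rank b then b else a

/-- Kleene negation. -/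
def tneg : TV → TV
  | f => t
  | u => u
  | t => f

/-- The precision order on truth values: `u ≤_p f` and `u ≤_p t` (and reflexivity). -/
def lep (a b : TV) : Prop := a = u ∨ a = b

end TV

/-- Pointwise precision order on three-valued interpretations. -/
def leP {A : Type} (ν ν' : A → TV) : Prop := ∀ a, TV.lep (ν a) (ν' a)

/-- Propositional formulas over a type `A` of atoms. -/
inductive Form (A : Type) where
  | atom : A → Form A
  | conj : Form A → Form A → Form A
  | disj : Form A → Form A → Form A
  | neg  : Form A → Form A

namespace Form

variable {A : Type}

/-- Two-valued satisfaction of a formula in an interpretation (a set of atoms). -/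
def sat (I : Set A) : Form A → Prop
  | .atom a => a ∈ I
  | .conj φ ψ => sat I φ ∧ sat I ψ
  | .disj φ ψ => sat I φ ∨ sat I ψ
  | .neg φ => ¬ sat I φ

/-- Kleene three-valued valuation of a formula. -/
def val (ν : A → TV) : Form A → TV
  | .atom a => ν a
  | .conj φ ψ => TV.tmin (val ν φ) (val ν ψ)
  | .disj φ ψ => TV.tmax (val ν φ) (val ν ψ)
  | .neg φ => TV.tneg (val ν φ)

/-- A formula is positive if it contains no negation. -/
def Positive : Form A → Prop
  | .atom _ => True
  | .conj φ ψ => Positive φ ∧ Positive ψ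
  | .disj φ ψ => Positive φ ∧ Positive ψ
  | .neg _ => False

/-- The set of atoms occurring in a formula. -/
def atoms : Form A → Set A
  | .atom a => {a}
  | .conj φ ψ => atoms φ ∪ atoms ψ
  | .disj φ ψ => atoms φ ∪ atoms ψ
  | .neg φ => atoms φ

/-- Atoms occurring under a number of negations of parity `b` (`true` = odd). -/
def atomsPar : Bool → Form A → Set A
  | b, .atom a => if b then ∅ else {a}
  | b, .conj φ ψ => atomsPar b φ ∪ atomsPar b ψ
  | b, .disj φ ψ => atomsPar b φ ∪ atomsPar b ψ
  | b, .neg φ => atomsPar (!b) φ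

/-- Atoms occurring within the scope of an odd number of negations. -/
def natoms (φ : Form A) : Set A := atomsPar true φ

end Form

/-- A CP-law: a nonempty head list of distinct atoms with probabilities in `(0,1]`
summing to at most `1`, together with a body formula. -/
structure CPLaw (A : Type) where
  head : List (A × ℝ)
  body : Form A
  head_ne : head ≠ []
  head_nodup : (head.map Prod.fst).Nodup
  head_pos : ∀ p ∈ head, 0 < p.2 ∧ p.2 ≤ 1
  head_sum : (head.map Prod.snd).sum ≤ 1

namespace CPLaw

variable {A : Type}

/-- `head_At(r)`: the set of atoms occurring in the head of `r`. -/
def headAt (r : CPLaw A) : Set A := {a | a ∈ r.head.map Prod.fst}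

/-- The sum `Σᵢ αᵢ` of the probabilities in the head of `r`. -/
def psum (r : CPLaw A) : ℝ := (r.head.map Prod.snd).sum

end CPLaw

/-- A probabilistic process: a finite rooted tree (given by a parent function with a
depth function ensuring well-foundedness), with an interpretation, an edge probability
and a path probability attached to each node, together with (for use in execution
models) a CP-law index `rule` attached to each node and, for each non-root node, the
`choice` in the head of the rule fired at its parent that it corresponds to
(`none` is the extra child carrying the leftover probability `1 - Σᵢ αᵢ`). -/
structure Proc (A R : Type) where
  Node : Type
  [fintypeNode : Fintype Node]
  root : Node
  parent : Node → Node
  depth : Node → ℕ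
  interp : Node → Set A
  prob : Node → ℝ
  pathProb : Node → ℝ
  rule : Node → R
  choice : Node → Option ℕ
  depth_root : depth root = 0
  depth_parent : ∀ s, s ≠ root → depth s = depth (parent s) + 1
  pathProb_root : pathProb root = 1
  pathProb_parent : ∀ s, s ≠ root → pathProb s = pathProb (parent s) * prob s

attribute [instance] Proc.fintypeNode

namespace Proc

variable {A R : Type} (W : Proc A R)

/-- `s'` is a child of `s`. -/
def isChild (s' s : W.Node) : Prop := s' ≠ W.root ∧ W.parent s' = s

/-- `s` is a leaf. -/
def isLeaf (s : W.Node) : Prop := ∀ s', ¬ W.isChild s' s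

/-- `strictAnc a b`: `a` is a strict ancestor of `b`. -/
def strictAnc (a b : W.Node) : Prop :=
  Relation.TransGen (fun y x => W.isChild y x) b a

end Proc

variable {A R : Type}

/-- `R_E(s)`: the CP-laws that have not fired at any strict ancestor of `s`. -/
def RE (W : Proc A R) (s : W.Node) : Set R :=
  {r | ∀ s', W.strictAnc s' s → W.rule s' ≠ r}

/-- The CP-law `E(s)` fires at the non-leaf node `s`: `s` has exactly one child for
each head element `(Aᵢ, αᵢ)` (with interpretation `I(s) ∪ {Aᵢ}` and edge probability
`αᵢ`), plus exactly one extra child with unchanged interpretation and edge probability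
`1 - Σᵢ αᵢ` in case `Σᵢ αᵢ < 1`. -/
def FiresAt (C : R → CPLaw A) (W : Proc A R) (s : W.Node) : Prop :=
  (∀ s', W.isChild s' s →
     (∀ i, W.choice s' = some i →
        ∃ h : i < (C (W.rule s)).head.length,
          W.interp s' = insert ((C (W.rule s)).head.get ⟨i, h⟩).1 (W.interp s) ∧
          W.prob s' = ((C (W.rule s)).head.get ⟨i, h⟩).2) ∧
     (W.choice s' = none →
        (C (W.rule s)).psum < 1 ∧ W.interp s' = W.interp s ∧
          W.prob s' = 1 - (C (W.rule s)).psum)) ∧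
  (∀ s₁ s₂, W.isChild s₁ s → W.isChild s₂ s → W.choice s₁ = W.choice s₂ → s₁ = s₂) ∧
  (∀ i, i < (C (W.rule s)).head.length → ∃ s', W.isChild s' s ∧ W.choice s' = some i) ∧
  ((C (W.rule s)).psum < 1 → ∃ s', W.isChild s' s ∧ W.choice s' = none)

/-- `⟨W, I, E⟩` is a weak execution model of the CP-theory `C`. -/
def IsWEM (C : R → CPLaw A) (W : Proc A R) : Prop :=
  W.interp W.root = (∅ : Set A) ∧
  (∀ s, s ≠ W.root → 0 ≤ W.prob s ∧ W.prob s ≤ 1) ∧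
  (∀ s, ¬ W.isLeaf s →
    (∑ s' ∈ Finset.univ.filter (fun s' => W.isChild s' s), W.prob s') = 1) ∧
  (∀ s, ¬ W.isLeaf s →
    W.rule s ∈ RE W s ∧ Form.sat (W.interp s) (C (W.rule s)).body ∧ FiresAt C W s) ∧
  (∀ l, W.isLeaf l → ∀ r ∈ RE W l, ¬ Form.sat (W.interp l) (C r).body)

/-- `ν 0, …, ν n` is a hypothetical derivation sequence at node `s`. -/
def IsHDS (C : R → CPLaw A) (W : Proc A R) (s : W.Node)
    (ν : ℕ → A → TV) (n : ℕ) : Prop :=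
  (∀ a, ν 0 a = if a ∈ W.interp s then TV.t else TV.f) ∧
  ∀ i, i < n → ∃ r ∈ RE W s,
    Form.val (ν i) (C r).body ≠ TV.f ∧
    (∀ p ∈ (C r).headAt, ν i p = TV.f → ν (i+1) p = TV.u) ∧
    (∀ p, ¬ (p ∈ (C r).headAt ∧ ν i p = TV.f) → ν (i+1) p = ν i p)

/-- The hypothetical derivation sequence `ν 0, …, ν n` at `s` is terminal. -/
def HDSTerminal (C : R → CPLaw A) (W : Proc A R) (s : W.Node)
    (ν : ℕ → A → TV) (n : ℕ) : Prop :=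
  ¬ ∃ r ∈ RE W s, Form.val (ν n) (C r).body ≠ TV.f ∧
      ∃ p ∈ (C r).headAt, ν n p = TV.f

/-- `⟨W, I, E⟩` is an execution model of `C`: a weak execution model in which, at every
non-leaf node, the body of the fired CP-law is not unknown in the potential of the
node (the common limit of all terminal hypothetical derivation sequences). -/
def IsExec (C : R → CPLaw A) (W : Proc A R) : Prop :=
  IsWEM C W ∧
  ∀ s, ¬ W.isLeaf s → ∀ ν n, IsHDS C W s ν n → HDSTerminal C W s ν n →
    Form.val (ν n) (C (W.rule s)).body ≠ TV.u

/-- `π_T`: the probability distribution on interpretations induced by a process. -/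
def piT (W : Proc A R) (J : Set A) : ℝ :=
  ∑ l ∈ Finset.univ.filter (fun l => W.isLeaf l ∧ W.interp l = J), W.pathProb l

lemma TV.rank_tmin (a b : TV) : (TV.tmin a b).rank = min a.rank b.rank := by
  unfold TV.tmin; split <;> omega

lemma TV.rank_tmax (a b : TV) : (TV.tmax a b).rank = max a.rank b.rank := by
  unfold TV.tmax; split <;> omega

lemma TV.eq_t_of_rank {a : TV} (h : 2 ≤ a.rank) : a = TV.t := by
  cases a <;> simp [TV.rank] at h ⊢

lemma TV.tmin_eq_t {a b : TV} : TV.tmin a b = TV.t ↔ a = TV.t ∧ b = TV.t := by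
  cases a <;> cases b <;> simp [TV.tmin, TV.rank] <;> decide

lemma TV.tmax_eq_t {a b : TV} : TV.tmax a b = TV.t ↔ a = TV.t ∨ b = TV.t := by
  cases a <;> cases b <;> simp [TV.tmax, TV.rank] <;> decide

lemma val_mono {A : Type} {ν ν' : A → TV} (h : ∀ a, (ν a).rank ≤ (ν' a).rank)
    {φ : Form A} (hp : φ.Positive) :
    (Form.val ν φ).rank ≤ (Form.val ν' φ).rank := by
  induction φ with
  | atom a => exact h a
  | conj φ ψ ihφ ihψ =>
      have h1 := ihφ hp.1; have h2 := ihψ hp.2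
      simp only [Form.val, TV.rank_tmin]; omega
  | disj φ ψ ihφ ihψ =>
      have h1 := ihφ hp.1; have h2 := ihψ hp.2
      simp only [Form.val, TV.rank_tmax]; omega
  | neg φ ih => exact absurd hp id

lemma val_t_iff {A : Type} (I : Set A) {φ : Form A} (hp : φ.Positive) :
    Form.val (fun a => if a ∈ I then TV.t else TV.f) φ = TV.t ↔ Form.sat I φ := by
  induction φ with
  | atom a =>
      simp only [Form.val, Form.sat]
      by_cases h : a ∈ I <;> simp [h]
  | conj φ ψ ihφ ihψ =>
      simp only [Form.val, Form.sat, TV.tmin_eq_t, ihφ hp.1, ihψ hp.2]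
  | disj φ ψ ihφ ihψ =>
      simp only [Form.val, Form.sat, TV.tmax_eq_t, ihφ hp.1, ihψ hp.2]
  | neg φ ih => exact absurd hp id

/-- For positive CP-theories, weak execution models and execution models coincide. -/
theorem positive_wem_is_exec {A R : Type} [Fintype A] [Fintype R]
    (C : R → CPLaw A) (hpos : ∀ r, (C r).body.Positive)
    (W : Proc A R) (hW : IsWEM C W) :
    IsExec C W := by
  refine ⟨hW, ?_⟩
  intro s hs ν n hHDS _
  have hsat : Form.sat (W.interp s) (C (W.rule s)).body :=
    (hW.2.2.2.1 s hs).2.1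
  have hmono : ∀ i, i ≤ n → ∀ a, (ν 0 a).rank ≤ (ν i a).rank := by
    intro i
    induction i with
    | zero => intro _ a; exact le_rfl
    | succ i ih =>
        intro hle a
        obtain ⟨r, -, -, h1, h2⟩ := hHDS.2 i (by omega)
        have hia := ih (by omega) a
        by_cases hc : a ∈ (C r).headAt ∧ ν i a = TV.f
        · rw [h1 a hc.1 hc.2]
          rw [hc.2] at hia
          simp only [TV.rank] at hia ⊢; omega
        · rw [h2 a hc]; exact hia
  have h0val : Form.val (ν 0) (C (W.rule s)).body = TV.t := by
    have h0 : ν 0 = fun a => if a ∈ W.interp s then TV.t else TV.f :=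
      funext hHDS.1
    rw [h0]
    exact (val_t_iff _ (hpos _)).2 hsat
  have hrk := val_mono (hmono n le_rfl) (hpos (W.rule s))
  rw [h0val] at hrk
  have ht := TV.eq_t_of_rank hrk
  rw [ht]
  decide

end CP
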